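/- arXiv:2509.22587 — 2 statements merged into one kernel-verified Lean document; each statement's English description precedes it below -/
import Mathlib

section
/- (Main theorem, local form) Let a < b, k ≥ 0. Suppose u ∈ 𝒫_k([a,b]), û_a ∈ ℝ, and F : [a,b] → ℝ is integrable, and that the DG relation holds: −∫_a^b u(t)v'(t) dt + u(b)v(b) − û_a·v(a) = ∫_a^b F(t)v(t) dt for all v ∈ 𝒫_k. Let 𝓡 ∈ 𝒫_{k+1} satisfy 𝓡(b)=0, 𝓡(a)=1, ∫_a^b 𝓡 w dt = 0 for all w ∈ 𝒫_{k−1}, and define u*(t) := u(t) + (û_a − u(a))𝓡(t). Then ∫_a^b v(t)·(u*)'(t) dt = ∫_a^b F(t)v(t) dt for all v ∈ 𝒫_k, and u*(a) = û_a. -/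
/-!
Integrating by parts, `∫ v u' = u(b)v(b) - u(a)v(a) - ∫ u v'`, so the DG relation says
`∫ v u' = ∫ F v + (û_a - u(a)) v(a)`. The Radau polynomial absorbs the jump at `a`: since `v'` has
degree below `k`, orthogonality kills `∫ 𝓡 v'`, and integrating by parts with `𝓡(a) = 1`,
`𝓡(b) = 0` gives `∫ v 𝓡' = -v(a)`.
-/

open Polynomial MeasureTheory

namespace Polynomial

theorem integral_eval_mul_eval_derivative (p q : ℝ[X]) (a b : ℝ) :
    ∫ t in a..b, q.eval t * (derivative p).eval t
      = p.eval b * q.eval b - p.eval a * q.eval a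
        - ∫ t in a..b, p.eval t * (derivative q).eval t := by
  have hcont (r : ℝ[X]) : IntervalIntegrable (fun t ↦ (derivative r).eval t) volume a b :=
    (derivative r).continuous.intervalIntegrable a b
  rw [intervalIntegral.integral_mul_deriv_eq_deriv_mul (fun t _ ↦ q.hasDerivAt t)
    (fun t _ ↦ p.hasDerivAt t) (hcont q) (hcont p)]
  simp only [mul_comm]

theorem integral_eval_mul_eval_derivative_of_orthogonal {k : ℕ} {a b : ℝ} {R : ℝ[X]}
    (hRb : R.eval b = 0) (hRa : R.eval a = 1)
    (hRorth : ∀ w : ℝ[X], w.degree < k → ∫ t in a..b, R.eval t * w.eval t = 0)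
    {v : ℝ[X]} (hv : v.degree ≤ k) :
    ∫ t in a..b, v.eval t * (derivative R).eval t = -v.eval a := by
  have hRv' : ∫ t in a..b, R.eval t * (derivative v).eval t = 0 := by
    rcases eq_or_ne v 0 with rfl | hv0
    · simp
    · exact hRorth _ ((degree_derivative_lt hv0).trans_le hv)
  rw [integral_eval_mul_eval_derivative, hRv', hRa, hRb]
  ring

end Polynomial

theorem dg_postprocessed_is_cg_general (k : ℕ) (a b : ℝ)
    (u : Polynomial ℝ) (uhat_a : ℝ)
    (F : ℝ → ℝ)
    (hDG : ∀ v : Polynomial ℝ, v.degree ≤ (k : ℕ) →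
      -(∫ t in a..b, u.eval t * (Polynomial.derivative v).eval t)
          + u.eval b * v.eval b - uhat_a * v.eval a
        = ∫ t in a..b, F t * v.eval t)
    (𝓡 : Polynomial ℝ)
    (h𝓡b : 𝓡.eval b = 0) (h𝓡a : 𝓡.eval a = 1)
    (h𝓡orth : ∀ w : Polynomial ℝ, w.degree < (k : ℕ) →
      ∫ t in a..b, 𝓡.eval t * w.eval t = 0) :
    (∀ v : Polynomial ℝ, v.degree ≤ (k : ℕ) →
      ∫ t in a..b,
          v.eval t * (Polynomial.derivative (u + Polynomial.C (uhat_a - u.eval a) * 𝓡)).eval t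
        = ∫ t in a..b, F t * v.eval t) ∧
    (u + Polynomial.C (uhat_a - u.eval a) * 𝓡).eval a = uhat_a := by
  set c := uhat_a - u.eval a
  refine ⟨fun v hv ↦ ?_, by simp [h𝓡a, c]⟩
  have hsplit : ∀ t, v.eval t * (derivative (u + C c * 𝓡)).eval t
      = v.eval t * (derivative u).eval t + c * (v.eval t * (derivative 𝓡).eval t) := by
    intro t
    simp only [derivative_add, derivative_C_mul, eval_add, eval_mul, eval_C]
    ring
  have hint (p : ℝ[X]) : IntervalIntegrable (fun t ↦ v.eval t * (derivative p).eval t) volume a b :=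
    (v.continuous.mul (derivative p).continuous).intervalIntegrable a b
  simp_rw [hsplit]
  rw [intervalIntegral.integral_add (hint u) ((hint 𝓡).const_mul c),
    intervalIntegral.integral_const_mul, integral_eval_mul_eval_derivative,
    integral_eval_mul_eval_derivative_of_orthogonal h𝓡b h𝓡a h𝓡orth hv, ← hDG v hv]
  ring

/-- Main theorem, local form: If `u ∈ 𝒫_k` satisfies the DG weak relation
with numerical trace `uhat_a` and right-hand side `F`, and `𝓡 ∈ 𝒫_{k+1}` is the scaled
left-Radau polynomial (`𝓡(b)=0`, `𝓡(a)=1`, orthogonal to `𝒫_{k-1}`), then the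
post-processed `u* := u + (uhat_a - u(a))𝓡` satisfies the CG-type weak relation with the same
right-hand side, and `u*(a) = uhat_a`. -/
theorem dg_postprocessed_is_cg (k : ℕ) (a b : ℝ) (hab : a < b)
    (u : Polynomial ℝ) (hu : u.degree ≤ (k : ℕ)) (uhat_a : ℝ)
    (F : ℝ → ℝ) (hF : IntervalIntegrable F volume a b)
    (hDG : ∀ v : Polynomial ℝ, v.degree ≤ (k : ℕ) →
      -(∫ t in a..b, u.eval t * (Polynomial.derivative v).eval t)
          + u.eval b * v.eval b - uhat_a * v.eval a
        = ∫ t in a..b, F t * v.eval t)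
    (𝓡 : Polynomial ℝ) (h𝓡deg : 𝓡.degree ≤ ((k + 1 : ℕ) : WithBot ℕ))
    (h𝓡b : 𝓡.eval b = 0) (h𝓡a : 𝓡.eval a = 1)
    (h𝓡orth : ∀ w : Polynomial ℝ, w.degree < (k : ℕ) →
      ∫ t in a..b, 𝓡.eval t * w.eval t = 0) :
    (∀ v : Polynomial ℝ, v.degree ≤ (k : ℕ) →
      ∫ t in a..b,
          v.eval t * (Polynomial.derivative (u + Polynomial.C (uhat_a - u.eval a) * 𝓡)).eval t
        = ∫ t in a..b, F t * v.eval t) ∧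
    (u + Polynomial.C (uhat_a - u.eval a) * 𝓡).eval a = uhat_a :=
  dg_postprocessed_is_cg_general k a b u uhat_a F hDG 𝓡 h𝓡b h𝓡a h𝓡orth
end

section
/- (Uniqueness of DG solution on one interval for linear F) Let a < b, k ≥ 0, û_a ∈ ℝ, and F : [a,b] → ℝ integrable. There exists a unique u ∈ 𝒫_k([a,b]) satisfying −∫_a^b u(t)v'(t) dt + u(b)v(b) − û_a v(a) = ∫_a^b F(t)v(t) dt for all v ∈ 𝒫_k([a,b]). -/
open Polynomial MeasureTheory

/-!
Write `B(u, v) = -∫ u v' + u(b) v(b)` and `ℓ(v) = ∫ F v + û_a v(a)`; the DG relation says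
`B(u, ·) = ℓ` on `𝒫_k`, a square linear system on a finite-dimensional space, so it suffices that
`B(u, ·) = 0` on `𝒫_k` forces `u = 0`. Integration by parts gives `B(u, v) = ∫ u' v + u(a) v(a)`,
hence `B(u, u) = (u(a)² + u(b)²) / 2`, so `u(a) = 0`; then `0 = B(u, u') = ∫ u'²`, so `u` is a
constant vanishing at `a`.
-/

namespace LinearMap

theorem existsUnique_mem_forall_mem_apply_eq {K M : Type*} [Field K] [AddCommGroup M]
    [Module K M] (B : M →ₗ[K] M →ₗ[K] K) (W : Submodule K M) [FiniteDimensional K W]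
    (hB : ∀ u ∈ W, (∀ v ∈ W, B u v = 0) → u = 0) (φ : M →ₗ[K] K) :
    ∃! u, u ∈ W ∧ ∀ v ∈ W, B u v = φ v := by
  let T : W →ₗ[K] Module.Dual K W := (B.domRestrict W).compl₂ W.subtype
  have hT : Function.Injective T := by
    rw [← LinearMap.ker_eq_bot, Submodule.eq_bot_iff]
    intro u hu
    exact Subtype.ext <| hB u u.2 fun v hv => LinearMap.congr_fun hu ⟨v, hv⟩
  obtain ⟨u, hu⟩ := (LinearMap.injective_iff_surjective_of_finrank_eq_finrank
    (Subspace.dual_finrank_eq (V := W)).symm).mp hT (φ.domRestrict W)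
  refine ⟨u, ⟨u.2, fun v hv => LinearMap.congr_fun hu ⟨v, hv⟩⟩, ?_⟩
  rintro w ⟨hw, hwφ⟩
  refine sub_eq_zero.mp <| hB _ (W.sub_mem hw u.2) fun v hv => ?_
  rw [map_sub, LinearMap.sub_apply, hwφ v hv, sub_eq_zero]
  exact (LinearMap.congr_fun hu ⟨v, hv⟩).symm

end LinearMap

namespace Polynomial

instance {R : Type*} [CommRing R] (n : ℕ) : Module.Finite R (degreeLE R n) := by
  rw [← degreeLT_succ_eq_degreeLE]
  exact Module.Finite.equiv (degreeLTEquiv R (n + 1)).symm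

variable {a b : ℝ}

theorem intervalIntegrable_eval (p : ℝ[X]) : IntervalIntegrable (fun t => p.eval t) volume a b :=
  p.continuous.intervalIntegrable a b

theorem integral_eval_mul_derivative (p q : ℝ[X]) :
    ∫ t in a..b, p.eval t * (derivative q).eval t
      = p.eval b * q.eval b - p.eval a * q.eval a - ∫ t in a..b, (derivative p).eval t * q.eval t :=
  intervalIntegral.integral_mul_deriv_eq_deriv_mul (fun x _ => p.hasDerivAt x)
    (fun x _ => q.hasDerivAt x) (intervalIntegrable_eval _) (intervalIntegrable_eval _)

theorem integral_eval_mul_self_pos (hab : a < b) {p : ℝ[X]} (hp : p ≠ 0) :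
    0 < ∫ t in a..b, p.eval t * p.eval t := by
  rw [intervalIntegral.integral_pos_iff_support_of_nonneg_ae
    (ae_of_all _ fun t => mul_self_nonneg _)
    ((p.continuous.mul p.continuous).intervalIntegrable a b)]
  refine ⟨hab, ?_⟩
  have hroots : volume {t | p.IsRoot t} = 0 := (finite_setOfPred_isRoot hp).measure_zero _
  calc 0 < volume (Set.Ioc a b) := by simp [hab]
    _ = volume (Set.Ioc a b \ {t | p.IsRoot t}) := (measure_sdiff_null hroots).symm
    _ ≤ volume (Function.support (fun t => p.eval t * p.eval t) ∩ Set.Ioc a b) :=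
      measure_mono fun t ⟨hI, hr⟩ => ⟨mul_self_ne_zero.2 hr, hI⟩

variable (a b) in
noncomputable def intervalIntegralₗ : ℝ[X] →ₗ[ℝ] ℝ where
  toFun p := ∫ t in a..b, p.eval t
  map_add' p q := by
    simp only [eval_add]
    exact intervalIntegral.integral_add (intervalIntegrable_eval p) (intervalIntegrable_eval q)
  map_smul' c p := by
    simp only [eval_smul, smul_eq_mul, RingHom.id_apply]
    exact intervalIntegral.integral_const_mul c _

noncomputable def weightedIntervalIntegralₗ {F : ℝ → ℝ} (hF : IntervalIntegrable F volume a b) :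
    ℝ[X] →ₗ[ℝ] ℝ where
  toFun p := ∫ t in a..b, F t * p.eval t
  map_add' p q := by
    simp only [eval_add, mul_add]
    exact intervalIntegral.integral_add (hF.mul_continuousOn p.continuous.continuousOn)
      (hF.mul_continuousOn q.continuous.continuousOn)
  map_smul' c p := by
    simp only [eval_smul, smul_eq_mul, RingHom.id_apply, mul_left_comm]
    exact intervalIntegral.integral_const_mul c _

end Polynomial

section DG

variable {a b : ℝ}

variable (a b) in
noncomputable def dgForm : ℝ[X] →ₗ[ℝ] ℝ[X] →ₗ[ℝ] ℝ :=
  -((LinearMap.mul ℝ ℝ[X]).compr₂ (intervalIntegralₗ a b)).compl₂ derivative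
    + (LinearMap.mul ℝ ℝ).compl₁₂ (leval b) (leval b)

theorem dgForm_apply (u v : ℝ[X]) :
    dgForm a b u v = -(∫ t in a..b, u.eval t * (derivative v).eval t) + u.eval b * v.eval b := by
  simp [dgForm, intervalIntegralₗ]

theorem dgForm_apply_eq_integral_derivative_mul (u v : ℝ[X]) :
    dgForm a b u v = (∫ t in a..b, (derivative u).eval t * v.eval t) + u.eval a * v.eval a := by
  rw [dgForm_apply, integral_eval_mul_derivative]
  ring

theorem dgForm_self (u : ℝ[X]) : dgForm a b u u = (u.eval a ^ 2 + u.eval b ^ 2) / 2 := by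
  have hleft : dgForm a b u u = _ := dgForm_apply u u
  have hright : dgForm a b u u = _ := dgForm_apply_eq_integral_derivative_mul u u
  have hcomm : ∫ t in a..b, (derivative u).eval t * u.eval t
      = ∫ t in a..b, u.eval t * (derivative u).eval t := by
    simp only [mul_comm]
  linarith

theorem eq_zero_of_dgForm_eq_zero_on_degreeLE (hab : a < b) (k : ℕ) :
    ∀ u ∈ degreeLE ℝ k, (∀ v ∈ degreeLE ℝ k, dgForm a b u v = 0) → u = 0 := by
  intro u hu h
  have hua : u.eval a = 0 := by
    have := dgForm_self (a := a) (b := b) u ▸ h u hu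
    nlinarith [sq_nonneg (u.eval a), sq_nonneg (u.eval b)]
  have hu' : derivative u = 0 := by
    by_contra hne
    have hmem : derivative u ∈ degreeLE ℝ k :=
      mem_degreeLE.2 (degree_derivative_le.trans (mem_degreeLE.1 hu))
    have := h _ hmem
    rw [dgForm_apply_eq_integral_derivative_mul, hua, zero_mul, add_zero] at this
    exact (integral_eval_mul_self_pos hab hne).ne' this
  have hC := eq_C_of_natDegree_eq_zero (derivative_eq_zero.1 hu')
  rw [hC, eval_C] at hua
  rw [hC, hua, C_0]

end DG

/-- Uniqueness of the DG solution on one interval for linear `F`: Given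
`a < b`, `k ≥ 0`, `uhat_a : ℝ`, and an integrable `F`, there exists a unique polynomial
`u` of degree at most `k` satisfying the DG weak relation
`-∫_a^b u v' + u(b)v(b) - uhat_a·v(a) = ∫_a^b F v` for all `v ∈ 𝒫_k`. -/
theorem dg_exists_unique (k : ℕ) (a b : ℝ) (hab : a < b) (uhat_a : ℝ)
    (F : ℝ → ℝ) (hF : IntervalIntegrable F volume a b) :
    ∃! u : Polynomial ℝ, u.degree ≤ (k : ℕ) ∧
      ∀ v : Polynomial ℝ, v.degree ≤ (k : ℕ) →
        -(∫ t in a..b, u.eval t * (Polynomial.derivative v).eval t)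
            + u.eval b * v.eval b - uhat_a * v.eval a
          = ∫ t in a..b, F t * v.eval t := by
  refine (existsUnique_congr fun u => ?_).1 <|
    (dgForm a b).existsUnique_mem_forall_mem_apply_eq (degreeLE ℝ k)
      (eq_zero_of_dgForm_eq_zero_on_degreeLE hab k)
      (weightedIntervalIntegralₗ hF + uhat_a • leval a)
  refine and_congr mem_degreeLE (forall_congr' fun v => imp_congr mem_degreeLE ?_)
  rw [dgForm_apply, sub_eq_iff_eq_add]
  rfl
end
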